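/- arXiv:2012.11906 — 2 statements merged into one kernel-verified Lean document; each statement's English description precedes it below -/
import Mathlib

section
/- Let x₁, x₂ : ℝ → ℝ be C² solutions of the Lotka–Volterra competition system x₁' = a₁x₁(1 − x₁/a₂ − a₃x₂/a₂), x₂' = a₄x₂(1 − x₂/a₅ − a₆x₁/a₅), with y = x₁ and a₁, a₂, a₃, a₅ all nonzero. Then y satisfies the input-output equation a₁a₂a₃a₅·y''·y + (−a₁a₂a₃a₅ − a₂²a₄)(y')² + (a₁²a₃a₅ + a₁a₂a₃a₄a₆ − 2a₁a₂a₄)y'y² + (2a₁a₂²a₄ − a₁a₂a₃a₄a₅)y'y + (a₁²a₃a₄a₆ − a₁²a₄)y⁴ + (−a₁²a₂a₃a₄a₆ + 2a₁²a₂a₄ − a₁²a₃a₄a₅)y³ + (−a₁²a₂²a₄ + a₁²a₂a₃a₄a₅)y² = 0. -/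
/-!
Differentiating the first equation and substituting the second one expresses `y''` as a
polynomial in `y` and `x₂` (with denominators `a₂`, `a₅`). After multiplying by `y`, the
unobserved `x₂` only occurs through the product `y x₂`, which the first equation expresses
through `y` and `y'`; clearing denominators gives the input-output equation.
-/

theorem hasDerivAt_competition_term {u v : ℝ → ℝ} {u' v' r K c t : ℝ}
    (hu : HasDerivAt u u' t) (hv : HasDerivAt v v' t) :
    HasDerivAt (fun s => r * u s * (1 - u s / K - c * v s / K))
      (r * u' * (1 - u t / K - c * v t / K) + r * u t * (-(u' / K) - c * v' / K)) t := by
  have hinner : HasDerivAt (fun s => 1 - u s / K - c * v s / K) (-(u' / K) - c * v' / K) t := by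
    simpa using
      ((hasDerivAt_const t 1).fun_sub (hu.div_const K)).fun_sub ((hv.const_mul c).div_const K)
  exact (hu.const_mul r).mul hinner

theorem deriv_deriv_of_competition {x z : ℝ → ℝ} {r K c t : ℝ}
    (hx : DifferentiableAt ℝ x t) (hz : DifferentiableAt ℝ z t)
    (heq : ∀ s, deriv x s = r * x s * (1 - x s / K - c * z s / K)) :
    deriv (deriv x) t =
      r * deriv x t * (1 - x t / K - c * z t / K)
        + r * x t * (-(deriv x t / K) - c * deriv z t / K) := by
  have h := hasDerivAt_competition_term (r := r) (K := K) (c := c) hx.hasDerivAt hz.hasDerivAt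
  rw [← funext heq] at h
  exact h.deriv

theorem lotka_volterra_io_identity {a₁ a₂ a₃ a₄ a₅ a₆ y y' y'' z z' : ℝ}
    (ha₂ : a₂ ≠ 0) (ha₅ : a₅ ≠ 0)
    (hy' : y' = a₁ * y * (1 - y / a₂ - a₃ * z / a₂))
    (hz' : z' = a₄ * z * (1 - z / a₅ - a₆ * y / a₅))
    (hy'' : y'' = a₁ * y' * (1 - y / a₂ - a₃ * z / a₂) + a₁ * y * (-(y' / a₂) - a₃ * z' / a₂)) :
    a₁ * a₂ * a₃ * a₅ * y'' * y
      + (-(a₁ * a₂ * a₃ * a₅) - a₂ ^ 2 * a₄) * y' ^ 2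
      + (a₁ ^ 2 * a₃ * a₅ + a₁ * a₂ * a₃ * a₄ * a₆ - 2 * a₁ * a₂ * a₄) * y' * y ^ 2
      + (2 * a₁ * a₂ ^ 2 * a₄ - a₁ * a₂ * a₃ * a₄ * a₅) * y' * y
      + (a₁ ^ 2 * a₃ * a₄ * a₆ - a₁ ^ 2 * a₄) * y ^ 4
      + (-(a₁ ^ 2 * a₂ * a₃ * a₄ * a₆) + 2 * a₁ ^ 2 * a₂ * a₄ - a₁ ^ 2 * a₃ * a₄ * a₅) * y ^ 3
      + (-(a₁ ^ 2 * a₂ ^ 2 * a₄) + a₁ ^ 2 * a₂ * a₃ * a₄ * a₅) * y ^ 2 = 0 := by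
  subst hy'' hz' hy'
  field_simp
  ring

theorem lotka_volterra_io_equation_general
    (a₁ a₂ a₃ a₄ a₅ a₆ : ℝ) (ha : a₁ * a₂ * a₃ * a₅ ≠ 0)
    (x₁ x₂ : ℝ → ℝ)
    (hx₁ : Differentiable ℝ x₁)
    (hx₂ : Differentiable ℝ x₂)
    (heq₁ : ∀ t, deriv x₁ t = a₁ * x₁ t * (1 - x₁ t / a₂ - a₃ * x₂ t / a₂))
    (heq₂ : ∀ t, deriv x₂ t = a₄ * x₂ t * (1 - x₂ t / a₅ - a₆ * x₁ t / a₅))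
    (y : ℝ → ℝ) (hy : y = x₁) :
    ∀ t,
      a₁ * a₂ * a₃ * a₅ * (deriv (deriv y) t) * y t
        + (-(a₁ * a₂ * a₃ * a₅) - a₂ ^ 2 * a₄) * (deriv y t) ^ 2
        + (a₁ ^ 2 * a₃ * a₅ + a₁ * a₂ * a₃ * a₄ * a₆ - 2 * a₁ * a₂ * a₄)
            * deriv y t * (y t) ^ 2
        + (2 * a₁ * a₂ ^ 2 * a₄ - a₁ * a₂ * a₃ * a₄ * a₅) * deriv y t * y t
        + (a₁ ^ 2 * a₃ * a₄ * a₆ - a₁ ^ 2 * a₄) * (y t) ^ 4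
        + (-(a₁ ^ 2 * a₂ * a₃ * a₄ * a₆) + 2 * a₁ ^ 2 * a₂ * a₄
            - a₁ ^ 2 * a₃ * a₄ * a₅) * (y t) ^ 3
        + (-(a₁ ^ 2 * a₂ ^ 2 * a₄) + a₁ ^ 2 * a₂ * a₃ * a₄ * a₅) * (y t) ^ 2 = 0 := by
  subst hy
  intro t
  have ha₂ : a₂ ≠ 0 := right_ne_zero_of_mul (left_ne_zero_of_mul (left_ne_zero_of_mul ha))
  have ha₅ : a₅ ≠ 0 := right_ne_zero_of_mul ha
  exact lotka_volterra_io_identity ha₂ ha₅ (heq₁ t) (heq₂ t)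
    (deriv_deriv_of_competition (hx₁ t) (hx₂ t) heq₁)

theorem lotka_volterra_io_equation
    (a₁ a₂ a₃ a₄ a₅ a₆ : ℝ) (ha : a₁ * a₂ * a₃ * a₅ ≠ 0)
    (x₁ x₂ : ℝ → ℝ)
    (hx₁ : Differentiable ℝ x₁) (hx₁' : Differentiable ℝ (deriv x₁))
    (hx₂ : Differentiable ℝ x₂)
    (heq₁ : ∀ t, deriv x₁ t = a₁ * x₁ t * (1 - x₁ t / a₂ - a₃ * x₂ t / a₂))
    (heq₂ : ∀ t, deriv x₂ t = a₄ * x₂ t * (1 - x₂ t / a₅ - a₆ * x₁ t / a₅))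
    (y : ℝ → ℝ) (hy : y = x₁) :
    ∀ t,
      a₁ * a₂ * a₃ * a₅ * (deriv (deriv y) t) * y t
        + (-(a₁ * a₂ * a₃ * a₅) - a₂ ^ 2 * a₄) * (deriv y t) ^ 2
        + (a₁ ^ 2 * a₃ * a₅ + a₁ * a₂ * a₃ * a₄ * a₆ - 2 * a₁ * a₂ * a₄)
            * deriv y t * (y t) ^ 2
        + (2 * a₁ * a₂ ^ 2 * a₄ - a₁ * a₂ * a₃ * a₄ * a₅) * deriv y t * y t
        + (a₁ ^ 2 * a₃ * a₄ * a₆ - a₁ ^ 2 * a₄) * (y t) ^ 4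
        + (-(a₁ ^ 2 * a₂ * a₃ * a₄ * a₆) + 2 * a₁ ^ 2 * a₂ * a₄
            - a₁ ^ 2 * a₃ * a₄ * a₅) * (y t) ^ 3
        + (-(a₁ ^ 2 * a₂ ^ 2 * a₄) + a₁ ^ 2 * a₂ * a₃ * a₄ * a₅) * (y t) ^ 2 = 0 :=
  lotka_volterra_io_equation_general a₁ a₂ a₃ a₄ a₅ a₆ ha x₁ x₂ hx₁ hx₂ heq₁ heq₂ y hy
end

section
/- Let K be a field and I the ideal in K(a₁,…,a₇)[x₂, x₃, x₂', x₃', x₂'', x₃'', y, y', y''] generated by the polynomials x₂' − (a₄a₇/a₆)x₃ + a₄x₂, x₃' − (1−a₅)a₆x₂ + a₇x₃, x₂'' − (a₄a₇/a₆)x₃' + a₄x₂', x₃'' − (1−a₅)a₆x₂' + a₇x₃', y − x₃, y' − x₃', y'' − x₃''. Then the polynomial y'' + (a₄+a₇)y' + a₄a₅a₇y lies in I. -/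
open MvPolynomial

/-! Eliminating `x₂` from the linear system `x₂' = b x₃ - p x₂`, `x₃' = c x₂ - q x₃` with output
`y = x₃` gives `y'' + (p + q) y' + (p q - b c) y = 0`; for the viral model `b c = a₄ a₇ (1 - a₅)`. -/

theorem output_equation_mem_span {R : Type*} [CommRing R] (b c p q : R) :
    (X 8 + C (p + q) * X 7 + C (p * q - b * c) * X 6 : MvPolynomial (Fin 9) R) ∈
      Ideal.span {X 2 - C b * X 1 + C p * X 0, X 3 - C c * X 0 + C q * X 1,
        X 5 - C c * X 2 + C q * X 3, X 6 - X 1, X 7 - X 3, X 8 - X 5} := by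
  have hcomb : (X 8 + C (p + q) * X 7 + C (p * q - b * c) * X 6 : MvPolynomial (Fin 9) R) =
      C c * (X 2 - C b * X 1 + C p * X 0) + C p * (X 3 - C c * X 0 + C q * X 1)
        + (X 5 - C c * X 2 + C q * X 3) + C (p * q - b * c) * (X 6 - X 1)
        + C (p + q) * (X 7 - X 3) + (X 8 - X 5) := by
    simp only [C_add, C_sub, C_mul]
    ring
  rw [hcomb]
  refine add_mem (add_mem (add_mem (add_mem (add_mem ?_ ?_) ?_) ?_) ?_) ?_ <;>
    first
    | exact Ideal.mul_mem_left _ _ (Ideal.subset_span (by simp))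
    | exact Ideal.subset_span (by simp)

/-- Indeterminates: 0 = x₂, 1 = x₃, 2 = x₂', 3 = x₃', 4 = x₂'', 5 = x₃'',
    6 = y, 7 = y', 8 = y''. -/
theorem io_polynomial_in_ideal
    (F : Type*) [Field F] (a₄ a₅ a₆ a₇ : F) (ha₆ : a₆ ≠ 0) :
    (X 8 + C (a₄ + a₇) * X 7 + C (a₄ * a₅ * a₇) * X 6 : MvPolynomial (Fin 9) F) ∈
      Ideal.span ({
        X 2 - C (a₄ * a₇ / a₆) * X 1 + C a₄ * X 0,
        X 3 - C ((1 - a₅) * a₆) * X 0 + C a₇ * X 1,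
        X 4 - C (a₄ * a₇ / a₆) * X 3 + C a₄ * X 2,
        X 5 - C ((1 - a₅) * a₆) * X 2 + C a₇ * X 3,
        X 6 - X 1, X 7 - X 3, X 8 - X 5} : Set (MvPolynomial (Fin 9) F)) := by
  have hcoef : a₄ * a₅ * a₇ = a₄ * a₇ - a₄ * a₇ / a₆ * ((1 - a₅) * a₆) := by
    field_simp
    ring
  rw [hcoef]
  refine Ideal.span_mono ?_ (output_equation_mem_span (a₄ * a₇ / a₆) ((1 - a₅) * a₆) a₄ a₇)
  simp only [Set.insert_subset_iff, Set.mem_insert_iff, Set.mem_singleton_iff,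
    Set.singleton_subset_iff, true_or, or_true, and_self]
end
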